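/- arXiv:2101.03979 — 8 statements merged into one kernel-verified Lean document; each statement's English description precedes it below -/
import Mathlib

section
/- Let (X, d_X) and (Y, d_Y) be pseudometric spaces and let φ : X → Y be a continuous map. Then the following are equivalent: (i) φ maps Cauchy sequences in X to Cauchy sequences in Y; (ii) for every totally bounded subset T ⊆ X and every ε > 0 there exists η > 0 such that for all x ∈ T and all x' ∈ X with d_X(x, x') < η one has d_Y(φ(x), φ(x')) < ε. -/
open Metric Filter

/-- A subset `T` of a pseudometric space is totally bounded (with centers in `T`):
for every `r > 0` there are finitely many points of `T` whose open `r`-balls cover `T`. -/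
def TotBddIn {X : Type*} [PseudoMetricSpace X] (T : Set X) : Prop :=
  ∀ r : ℝ, 0 < r → ∃ F : Finset X, ↑F ⊆ T ∧ T ⊆ ⋃ x ∈ F, Metric.ball x r

lemma totBddIn_totallyBounded {X : Type*} [PseudoMetricSpace X] {T : Set X}
    (h : TotBddIn T) : TotallyBounded T := by
  rw [Metric.totallyBounded_iff]
  intro ε hε
  obtain ⟨F, -, hF⟩ := h ε hε
  exact ⟨F, F.finite_toSet, hF⟩

lemma exists_cauchy_subseq {X : Type*} [PseudoMetricSpace X] {T : Set X}
    (hT : TotallyBounded T) (x : ℕ → X) (hx : ∀ n, x n ∈ T) :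
    ∃ g : ℕ → ℕ, StrictMono g ∧ CauchySeq (x ∘ g) := by
  have h1 : TotallyBounded (((↑) : X → UniformSpace.Completion X) '' T) :=
    hT.image (UniformSpace.Completion.uniformContinuous_coe X)
  have h2 : IsCompact (closure (((↑) : X → UniformSpace.Completion X) '' T)) :=
    TotallyBounded.isCompact_of_isClosed h1.closure isClosed_closure
  obtain ⟨a, -, g, hg, hga⟩ := h2.tendsto_subseq
    (x := fun n => ((x n : UniformSpace.Completion X)))
    (fun n => subset_closure ⟨x n, hx n, rfl⟩)
  refine ⟨g, hg, ?_⟩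
  have hc : CauchySeq (fun n => ((x (g n) : UniformSpace.Completion X))) := hga.cauchySeq
  have := (UniformSpace.Completion.isUniformInducing_coe X).cauchy_map_iff
    (F := Filter.map (x ∘ g) atTop)
  unfold CauchySeq at hc ⊢
  rw [← this, Filter.map_map]
  exact hc

theorem stmt0 {X Y : Type*} [PseudoMetricSpace X] [PseudoMetricSpace Y]
    (φ : X → Y) (hφ : Continuous φ) :
    (∀ u : ℕ → X, CauchySeq u → CauchySeq (φ ∘ u)) ↔
      ∀ T : Set X, TotBddIn T → ∀ ε : ℝ, 0 < ε → ∃ η : ℝ, 0 < η ∧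
        ∀ x ∈ T, ∀ x' : X, dist x x' < η → dist (φ x) (φ x') < ε := by
  constructor
  · intro h T hT ε hε
    by_contra hcon
    push_neg at hcon
    -- for each n, pick bad pairs at scale 1/(n+1)
    have key : ∀ n : ℕ, ∃ x ∈ T, ∃ x' : X,
        dist x x' < 1 / (n + 1) ∧ ε ≤ dist (φ x) (φ x') := by
      intro n
      obtain ⟨x, hxT, x', hd, hε'⟩ := hcon (1 / (n + 1)) (by positivity)
      exact ⟨x, hxT, x', hd, hε'⟩
    choose x hxT y hxy hbad using key
    obtain ⟨g, hg, hgc⟩ := exists_cauchy_subseq (totBddIn_totallyBounded hT) x hxT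
    set v : ℕ → X := fun n => if Even n then x (g (n / 2)) else y (g (n / 2)) with hv
    have hvC : CauchySeq v := by
      rw [Metric.cauchySeq_iff]
      intro δ hδ
      obtain ⟨N₁, hN₁⟩ := Metric.cauchySeq_iff.1 hgc (δ / 3) (by linarith)
      obtain ⟨N₂, hN₂⟩ := exists_nat_one_div_lt (show (0:ℝ) < δ / 3 by linarith)
      refine ⟨2 * (max N₁ N₂), fun m hm n hn => ?_⟩
      have hclose : ∀ p : ℕ, 2 * (max N₁ N₂) ≤ p → dist (v p) (x (g (p / 2))) < δ / 3 := by
        intro p hp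
        by_cases hpe : Even p
        · simp [hv, hpe]; linarith
        · have : v p = y (g (p / 2)) := by simp [hv, hpe]
          rw [this, dist_comm]
          have h1 : dist (x (g (p / 2))) (y (g (p / 2))) < 1 / (g (p / 2) + 1) :=
            hxy (g (p / 2))
          have hp2 : N₂ ≤ p / 2 := le_trans (le_max_right N₁ N₂) (Nat.le_div_iff_mul_le (by norm_num) |>.2 (by omega))
          have hgp : N₂ ≤ g (p / 2) := le_trans hp2 (hg.le_apply)
          have : (1 : ℝ) / (g (p / 2) + 1) ≤ 1 / (N₂ + 1) := by
            apply one_div_le_one_div_of_le (by positivity)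
            have : (N₂ : ℝ) ≤ g (p / 2) := by exact_mod_cast hgp
            linarith
          linarith
      have hmid : dist (x (g (m / 2))) (x (g (n / 2))) < δ / 3 := by
        have hm2 : N₁ ≤ m / 2 := le_trans (le_max_left N₁ N₂) (Nat.le_div_iff_mul_le (by norm_num) |>.2 (by omega))
        have hn2 : N₁ ≤ n / 2 := le_trans (le_max_left N₁ N₂) (Nat.le_div_iff_mul_le (by norm_num) |>.2 (by omega))
        exact hN₁ (m / 2) hm2 (n / 2) hn2
      calc dist (v m) (v n)
          ≤ dist (v m) (x (g (m / 2))) + dist (x (g (m / 2))) (x (g (n / 2)))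
            + dist (x (g (n / 2))) (v n) := dist_triangle4 _ _ _ _
        _ < δ / 3 + δ / 3 + δ / 3 := by
            have := hclose m hm
            have := hclose n hn
            rw [dist_comm (x (g (n / 2)))]
            linarith
        _ = δ := by ring
    have hφv := h v hvC
    obtain ⟨N, hN⟩ := Metric.cauchySeq_iff.1 hφv ε hε
    have h1 : dist (φ (v (2 * N))) (φ (v (2 * N + 1))) < ε :=
      hN (2 * N) (by omega) (2 * N + 1) (by omega)
    have e1 : v (2 * N) = x (g N) := by simp [hv, Nat.mul_div_cancel_left N (by norm_num : 0 < 2)]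
    have e2 : v (2 * N + 1) = y (g N) := by
      have h2 : ¬ Even (2 * N + 1) := by simp [Nat.even_add_one]
      have h3 : (2 * N + 1) / 2 = N := by omega
      simp [hv, h2, h3]
    rw [e1, e2] at h1
    exact absurd h1 (not_lt.2 (hbad (g N)))
  · intro h u hu
    have hrange : TotBddIn (Set.range u) := by
      intro r hr
      classical
      obtain ⟨N, hN⟩ := Metric.cauchySeq_iff.1 hu r hr
      refine ⟨(Finset.range (N + 1)).image u, ?_, ?_⟩
      · intro z hz
        simp only [Finset.coe_image, Set.mem_image, Finset.mem_coe, Finset.mem_range] at hz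
        obtain ⟨k, -, rfl⟩ := hz
        exact Set.mem_range_self k
      · rintro z ⟨n, rfl⟩
        by_cases hn : n ≤ N
        · exact Set.mem_biUnion (Finset.mem_image_of_mem u (Finset.mem_range.2 (by omega)))
            (mem_ball_self hr)
        · refine Set.mem_biUnion (Finset.mem_image_of_mem u (Finset.mem_range.2 (Nat.lt_succ_self N))) ?_
          rw [mem_ball, dist_comm]
          exact hN N le_rfl n (by omega)
    rw [Metric.cauchySeq_iff]
    intro ε hε
    obtain ⟨η, hη, hηs⟩ := h (Set.range u) hrange ε hε
    obtain ⟨N, hN⟩ := Metric.cauchySeq_iff.1 hu η hη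
    exact ⟨N, fun m hm n hn => hηs (u m) (Set.mem_range_self m) (u n) (hN m hm n hn)⟩
end

section
/- Let G be a group endowed with a left-invariant pseudodistance d, and suppose that for every x ∈ G the right translation R_x(y) = yx is continuous at the identity e (i.e., for every ε > 0 there exists η > 0 such that d(z, e) < η implies d(zx, x) < ε). Then the multiplication map Op : G × G → G, Op(x, y) = xy, is Cauchy-continuous: it is continuous with respect to the product pseudodistance, and whenever (x_n) and (y_n) are Cauchy sequences in G, the sequence (x_n y_n) is Cauchy in G. -/
theorem stmt5 {G : Type*} [Group G] [PseudoMetricSpace G]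
    (hleft : ∀ x y z : G, dist (x * y) (x * z) = dist y z)
    (hR : ∀ x : G, ∀ ε : ℝ, 0 < ε → ∃ η : ℝ, 0 < η ∧
      ∀ z : G, dist z (1 : G) < η → dist (z * x) x < ε) :
    Continuous (fun p : G × G => p.1 * p.2) ∧
      ∀ u v : ℕ → G, CauchySeq u → CauchySeq v → CauchySeq fun n => u n * v n := by
  have key : ∀ (a : G) (ε : ℝ), 0 < ε → ∃ η : ℝ, 0 < η ∧ ∀ x x' : G,
      dist x x' < η → dist (x * a) (x' * a) < ε := by
    intro a ε hε
    obtain ⟨η, hη, h⟩ := hR a ε hε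
    refine ⟨η, hη, fun x x' hd => ?_⟩
    have h1 : dist (x'⁻¹ * x) (1 : G) < η := by
      have e : dist (x'⁻¹ * x) (x'⁻¹ * x') = dist x x' := hleft x'⁻¹ x x'
      rw [inv_mul_cancel] at e
      rwa [e]
    have h2 := h _ h1
    have e : dist (x'⁻¹ * (x * a)) (x'⁻¹ * (x' * a)) = dist (x * a) (x' * a) :=
      hleft x'⁻¹ (x * a) (x' * a)
    rw [← e, ← mul_assoc, ← mul_assoc, inv_mul_cancel, one_mul]
    exact h2
  constructor
  · rw [Metric.continuous_iff]
    rintro ⟨x₀, y₀⟩ ε hε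
    obtain ⟨η, hη, h⟩ := key y₀ (ε / 2) (by linarith)
    refine ⟨min η (ε / 2), by positivity, ?_⟩
    rintro ⟨x, y⟩ hd
    rw [Prod.dist_eq, max_lt_iff] at hd
    have hx : dist x x₀ < η := lt_of_lt_of_le hd.1 (min_le_left _ _)
    have hy : dist y y₀ < ε / 2 := lt_of_lt_of_le hd.2 (min_le_right _ _)
    calc dist (x * y) (x₀ * y₀)
        ≤ dist (x * y) (x * y₀) + dist (x * y₀) (x₀ * y₀) := dist_triangle _ _ _
      _ = dist y y₀ + dist (x * y₀) (x₀ * y₀) := by rw [hleft]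
      _ < ε / 2 + ε / 2 := add_lt_add hy (h x x₀ hx)
      _ = ε := by ring
  · intro u v hu hv
    rw [Metric.cauchySeq_iff] at hu hv ⊢
    intro ε hε
    obtain ⟨N₁, hN₁⟩ := hv (ε / 6) (by linarith)
    obtain ⟨η, hη, h⟩ := key (v N₁) (ε / 6) (by linarith)
    obtain ⟨N₂, hN₂⟩ := hu η hη
    refine ⟨max N₁ N₂, fun m hm n hn => ?_⟩
    have hm1 : N₁ ≤ m := le_trans (le_max_left _ _) hm
    have hn1 : N₁ ≤ n := le_trans (le_max_left _ _) hn
    have hm2 : N₂ ≤ m := le_trans (le_max_right _ _) hm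
    have hn2 : N₂ ≤ n := le_trans (le_max_right _ _) hn
    have hvmn : dist (v m) (v n) < ε / 6 := hN₁ m hm1 n hn1
    have hvn : dist (v n) (v N₁) < ε / 6 := hN₁ n hn1 N₁ le_rfl
    have humn : dist (u m) (u n) < η := hN₂ m hm2 n hn2
    have hmid : dist (u m * v N₁) (u n * v N₁) < ε / 6 := h _ _ humn
    calc dist (u m * v m) (u n * v n)
        ≤ dist (u m * v m) (u m * v n) + dist (u m * v n) (u n * v n) :=
          dist_triangle _ _ _
      _ ≤ dist (u m * v m) (u m * v n) +
          (dist (u m * v n) (u m * v N₁) + dist (u m * v N₁) (u n * v N₁) +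
            dist (u n * v N₁) (u n * v n)) := by
          gcongr
          exact dist_triangle4 _ _ _ _
      _ = dist (v m) (v n) + (dist (v n) (v N₁) + dist (u m * v N₁) (u n * v N₁) +
            dist (v N₁) (v n)) := by rw [hleft, hleft, hleft]
      _ < ε / 6 + (ε / 6 + ε / 6 + ε / 6) := by
          have hvn' : dist (v N₁) (v n) < ε / 6 := by rwa [dist_comm]
          gcongr
      _ < ε := by linarith
end

section
/- Let (G, δ) be a scalable group endowed with a compatible pseudodistance d. Suppose that for every x ∈ G the map ℝ → G, λ ↦ δ_λ(x), is continuous. Then the dilation map δ : ℝ × G → G, (λ, x) ↦ δ_λ(x), is Cauchy-continuous: it is continuous with respect to the product pseudodistance on ℝ × G, and whenever (λ_n) is a Cauchy sequence in ℝ and (x_n) is a Cauchy sequence in G, the sequence (δ_{λ_n}(x_n)) is Cauchy in G. -/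
theorem stmt6 {G : Type*} [Group G] [PseudoMetricSpace G]
    (δ : ℝ → G → G)
    (hmul : ∀ (l : ℝ) (x y : G), δ l (x * y) = δ l x * δ l y)
    (h0 : ∀ x : G, δ 0 x = 1)
    (hcomp : ∀ (l m : ℝ) (x : G), δ l (δ m x) = δ (l * m) x)
    (hbij : ∀ l : ℝ, l ≠ 0 → Function.Bijective (δ l))
    (hleft : ∀ x y z : G, dist (x * y) (x * z) = dist y z)
    (hdil : ∀ (l : ℝ) (x y : G), dist (δ l x) (δ l y) = |l| * dist x y)
    (hcont : ∀ x : G, Continuous fun l : ℝ => δ l x) :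
    Continuous (fun p : ℝ × G => δ p.1 p.2) ∧
      ∀ (l : ℕ → ℝ) (u : ℕ → G), CauchySeq l → CauchySeq u →
        CauchySeq fun n => δ (l n) (u n) := by
  -- key estimate
  have key : ∀ (l m : ℝ) (x y w : G),
      dist (δ l x) (δ m y) ≤
        |l| * dist x y + (|l| + |m|) * dist y w + dist (δ l w) (δ m w) := by
    intro l m x y w
    have h2 : dist (δ l y) (δ m y) ≤
        (|l| + |m|) * dist y w + dist (δ l w) (δ m w) := by
      calc dist (δ l y) (δ m y)
          ≤ dist (δ l y) (δ l w) + dist (δ l w) (δ m w) + dist (δ m w) (δ m y) :=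
            dist_triangle4 _ _ _ _
        _ = |l| * dist y w + dist (δ l w) (δ m w) + |m| * dist w y := by
            rw [hdil, hdil]
        _ = (|l| + |m|) * dist y w + dist (δ l w) (δ m w) := by
            rw [dist_comm w y]; ring
    have h1 : dist (δ l x) (δ m y) ≤ dist (δ l x) (δ l y) + dist (δ l y) (δ m y) :=
      dist_triangle _ _ _
    rw [hdil] at h1
    linarith
  have hcont2 : Continuous (fun p : ℝ × G => δ p.1 p.2) := by
    rw [continuous_iff_continuousAt]
    rintro ⟨m, y⟩
    rw [ContinuousAt, tendsto_iff_dist_tendsto_zero]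
    have hgc : Continuous
        (fun p : ℝ × G => |p.1| * dist p.2 y + dist (δ p.1 y) (δ m y)) := by
      exact ((continuous_fst.abs).mul (continuous_snd.dist continuous_const)).add
        (((hcont y).comp continuous_fst).dist continuous_const)
    have hg : Filter.Tendsto
        (fun p : ℝ × G => |p.1| * dist p.2 y + dist (δ p.1 y) (δ m y))
        (nhds (m, y)) (nhds 0) := by
      have := hgc.tendsto (m, y)
      simpa using this
    refine squeeze_zero (fun p => dist_nonneg) (fun p => ?_) hg
    have := key p.1 m p.2 y y
    simpa using this
  refine ⟨hcont2, ?_⟩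
  intro l u hl hu
  rw [Metric.cauchySeq_iff]
  intro ε hε
  obtain ⟨R, hR, hRb⟩ := cauchySeq_bdd hl
  set C : ℝ := |l 0| + R + 1 with hC
  have hCpos : 0 < C := by positivity
  have hlb : ∀ n, |l n| ≤ C := by
    intro n
    have h1 := hRb n 0
    rw [Real.dist_eq] at h1
    have h2 : |l n| ≤ |l n - l 0| + |l 0| := by
      have := abs_sub_abs_le_abs_sub (l n) (l 0)
      linarith
    linarith
  have hε9 : 0 < ε / (9 * C) := by positivity
  obtain ⟨N₁, hN₁⟩ := Metric.cauchySeq_iff.mp hu (ε / (9 * C)) hε9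
  obtain ⟨a, ha⟩ := cauchySeq_tendsto_of_complete hl
  have hv : CauchySeq (fun n => δ (l n) (u N₁)) :=
    (((hcont (u N₁)).tendsto a).comp ha).cauchySeq
  obtain ⟨N₂, hN₂⟩ := Metric.cauchySeq_iff.mp hv (ε / 3) (by positivity)
  refine ⟨max N₁ N₂, fun n hn m hm => ?_⟩
  have hn1 : N₁ ≤ n := le_trans (le_max_left _ _) hn
  have hm1 : N₁ ≤ m := le_trans (le_max_left _ _) hm
  have hn2 : N₂ ≤ n := le_trans (le_max_right _ _) hn
  have hm2 : N₂ ≤ m := le_trans (le_max_right _ _) hm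
  have e1 := hN₁ n hn1 m hm1
  have e2 := hN₁ m hm1 N₁ le_rfl
  have e3 := hN₂ n hn2 m hm2
  have hk := key (l n) (l m) (u n) (u m) (u N₁)
  have b1 : |l n| * dist (u n) (u m) ≤ C * (ε / (9 * C)) := by
    have := hlb n
    nlinarith [dist_nonneg (x := u n) (y := u m), abs_nonneg (l n)]
  have b2 : (|l n| + |l m|) * dist (u m) (u N₁) ≤ (C + C) * (ε / (9 * C)) := by
    have h1 := hlb n
    have h2 := hlb m
    nlinarith [dist_nonneg (x := u m) (y := u N₁), abs_nonneg (l n), abs_nonneg (l m)]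
  have hCe : C * (ε / (9 * C)) = ε / 9 := by field_simp
  have hCe2 : (C + C) * (ε / (9 * C)) = 2 * (ε / 9) := by field_simp; ring
  calc dist (δ (l n) (u n)) (δ (l m) (u m)) ≤ _ := hk
    _ < ε := by rw [hCe] at b1; rw [hCe2] at b2; linarith
end

section
/- Let (G, δ) and (G', δ') be scalable groups endowed with compatible pseudodistances d and d' respectively, and let φ : G → G' be a morphism of scalable groups, i.e., a group homomorphism satisfying φ(δ_λ(x)) = δ'_λ(φ(x)) for all λ ∈ ℝ and x ∈ G. Then φ is continuous at the identity e of G if and only if φ is Lipschitz, i.e., there exists C > 0 such that d'(φ(x), φ(y)) ≤ C d(x, y) for all x, y ∈ G. -/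
/-!
Write `‖x‖ := dist x 1`; by left invariance `dist x y = ‖x⁻¹ * y‖`, so a homomorphism is
`C`-Lipschitz as soon as `‖φ z‖ ≤ C ‖z‖`. Continuity at `1` gives `ε > 0` with
`‖w‖ < ε → ‖φ w‖ < 1`. Since `w = (δ_l 1)⁻¹ δ_l z` has `‖w‖ = l ‖z‖` and `‖φ w‖ = l ‖φ z‖`,
and `l > 0` is arbitrary, homogeneity upgrades this to `‖φ z‖ ≤ ε⁻¹ ‖z‖`.
-/

lemma le_inv_mul_of_forall_mul_lt {a b ε : ℝ} (ha : 0 ≤ a) (hε : 0 < ε)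
    (h : ∀ l : ℝ, 0 < l → l * a < ε → l * b < 1) : b ≤ ε⁻¹ * a := by
  by_contra! hlt
  have hb : 0 < b := lt_of_le_of_lt (by positivity) hlt
  have hεb : ε ≤ b⁻¹ * a := by
    by_contra! hab
    exact (h b⁻¹ (inv_pos.mpr hb) hab).ne (inv_mul_cancel₀ hb.ne')
  rw [inv_mul_eq_div, le_div_iff₀ hb] at hεb
  rw [inv_mul_eq_div, div_lt_iff₀ hε] at hlt
  linarith

section LeftInvariant

variable {G G' : Type*} [Group G] [PseudoMetricSpace G] [Group G'] [PseudoMetricSpace G']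

lemma dist_eq_dist_inv_mul_one (hleft : ∀ x y z : G, dist (x * y) (x * z) = dist y z)
    (x y : G) : dist y x = dist (x⁻¹ * y) 1 := by
  simpa using hleft x (x⁻¹ * y) 1

lemma MonoidHom.dist_le_mul_of_dist_one_le
    (hleft : ∀ x y z : G, dist (x * y) (x * z) = dist y z)
    (hleft' : ∀ x y z : G', dist (x * y) (x * z) = dist y z)
    (f : G →* G') {C : ℝ} (hC : ∀ z, dist (f z) 1 ≤ C * dist z 1) (x y : G) :
    dist (f x) (f y) ≤ C * dist x y := by
  rw [dist_comm, dist_comm x, dist_eq_dist_inv_mul_one hleft', dist_eq_dist_inv_mul_one hleft,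
    ← map_inv, ← map_mul]
  exact hC _

lemma MonoidHom.exists_dist_one_le_of_continuousAt_one (δ : ℝ → G → G) (δ' : ℝ → G' → G')
    (hleft : ∀ x y z : G, dist (x * y) (x * z) = dist y z)
    (hdil : ∀ (l : ℝ) (x y : G), dist (δ l x) (δ l y) = |l| * dist x y)
    (hleft' : ∀ x y z : G', dist (x * y) (x * z) = dist y z)
    (hdil' : ∀ (l : ℝ) (x y : G'), dist (δ' l x) (δ' l y) = |l| * dist x y)
    (f : G →* G') (hfdil : ∀ (l : ℝ) (x : G), f (δ l x) = δ' l (f x))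
    (hc : ContinuousAt f 1) : ∃ C : ℝ, 0 < C ∧ ∀ z, dist (f z) 1 ≤ C * dist z 1 := by
  obtain ⟨ε, hε, hball⟩ := Metric.continuousAt_iff.mp hc 1 one_pos
  refine ⟨ε⁻¹, inv_pos.mpr hε, fun z => le_inv_mul_of_forall_mul_lt dist_nonneg hε ?_⟩
  intro l hl hlz
  set w := (δ l 1)⁻¹ * δ l z
  have hw : dist w 1 = l * dist z 1 := by
    rw [← dist_eq_dist_inv_mul_one hleft, hdil, abs_of_pos hl]
  have hfw : dist (f w) 1 = l * dist (f z) 1 := by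
    rw [map_mul, map_inv, ← dist_eq_dist_inv_mul_one hleft', hfdil, hfdil, hdil', map_one,
      abs_of_pos hl]
  have := hball (hw ▸ hlz)
  rwa [map_one, hfw] at this

end LeftInvariant

theorem stmt7_general {G G' : Type*} [Group G] [PseudoMetricSpace G] [Group G'] [PseudoMetricSpace G']
    (δ : ℝ → G → G) (δ' : ℝ → G' → G')
    (hleft : ∀ x y z : G, dist (x * y) (x * z) = dist y z)
    (hdil : ∀ (l : ℝ) (x y : G), dist (δ l x) (δ l y) = |l| * dist x y)
    (hleft' : ∀ x y z : G', dist (x * y) (x * z) = dist y z)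
    (hdil' : ∀ (l : ℝ) (x y : G'), dist (δ' l x) (δ' l y) = |l| * dist x y)
    (φ : G → G')
    (hφmul : ∀ x y : G, φ (x * y) = φ x * φ y)
    (hφdil : ∀ (l : ℝ) (x : G), φ (δ l x) = δ' l (φ x)) :
    ContinuousAt φ (1 : G) ↔
      ∃ C : ℝ, 0 < C ∧ ∀ x y : G, dist (φ x) (φ y) ≤ C * dist x y := by
  let f : G →* G' := MonoidHom.mk' φ hφmul
  constructor
  · intro hc
    obtain ⟨C, hC, hbound⟩ :=
      f.exists_dist_one_le_of_continuousAt_one δ δ' hleft hdil hleft' hdil' hφdil hc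
    exact ⟨C, hC, f.dist_le_mul_of_dist_one_le hleft hleft' hbound⟩
  · rintro ⟨C, hC, hLip⟩
    exact (LipschitzWith.of_dist_le_mul (K := ⟨C, hC.le⟩) hLip).continuous.continuousAt

theorem stmt7 {G G' : Type*} [Group G] [PseudoMetricSpace G] [Group G'] [PseudoMetricSpace G']
    (δ : ℝ → G → G) (δ' : ℝ → G' → G')
    (hmul : ∀ (l : ℝ) (x y : G), δ l (x * y) = δ l x * δ l y)
    (h0 : ∀ x : G, δ 0 x = 1)
    (hcomp : ∀ (l m : ℝ) (x : G), δ l (δ m x) = δ (l * m) x)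
    (hbij : ∀ l : ℝ, l ≠ 0 → Function.Bijective (δ l))
    (hmul' : ∀ (l : ℝ) (x y : G'), δ' l (x * y) = δ' l x * δ' l y)
    (h0' : ∀ x : G', δ' 0 x = 1)
    (hcomp' : ∀ (l m : ℝ) (x : G'), δ' l (δ' m x) = δ' (l * m) x)
    (hbij' : ∀ l : ℝ, l ≠ 0 → Function.Bijective (δ' l))
    (hleft : ∀ x y z : G, dist (x * y) (x * z) = dist y z)
    (hdil : ∀ (l : ℝ) (x y : G), dist (δ l x) (δ l y) = |l| * dist x y)
    (hleft' : ∀ x y z : G', dist (x * y) (x * z) = dist y z)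
    (hdil' : ∀ (l : ℝ) (x y : G'), dist (δ' l x) (δ' l y) = |l| * dist x y)
    (φ : G → G')
    (hφmul : ∀ x y : G, φ (x * y) = φ x * φ y)
    (hφdil : ∀ (l : ℝ) (x : G), φ (δ l x) = δ' l (φ x)) :
    ContinuousAt φ (1 : G) ↔
      ∃ C : ℝ, 0 < C ∧ ∀ x y : G, dist (φ x) (φ y) ≤ C * dist x y :=
  stmt7_general δ δ' hleft hdil hleft' hdil' φ hφmul hφdil
end

section
/- Let (G, δ) be a scalable group endowed with a compatible pseudodistance d, and suppose that for every y ∈ G the right translation R_y(z) = zy is continuous at the identity e. Then the set Z(d) := {x ∈ G : d(x, e) = 0} is a normal subgroup of G which is invariant under all dilations, i.e., δ_λ(Z(d)) ⊆ Z(d) for every λ ∈ ℝ. -/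
/-!
A left-invariant pseudodistance has `d(xy, x) = d(y, e)`, so the points at distance zero from `e`
form a subgroup. Conjugating `n` by `g` and translating on the left by `g⁻¹` turns `d(gng⁻¹, e)`
into `d(ng⁻¹, g⁻¹)`, which vanishes because right translation by `g⁻¹` is continuous at `e` and
so preserves inseparability from `e`. Dilations scale distances and fix `e`, so they preserve
distance zero from `e`.
-/

theorem dist_eq_zero_of_continuousAt {X Y : Type*} [PseudoMetricSpace X] [PseudoMetricSpace Y]
    {f : X → Y} {x a : X} (hf : ContinuousAt f a) (hx : dist x a = 0) :
    dist (f x) (f a) = 0 := by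
  rw [← Metric.inseparable_iff] at hx ⊢
  exact specializes_iff_inseparable.mp (hx.specializes.map_of_continuousAt hf)

section LeftInvariant

variable {G : Type*} [Group G] [PseudoMetricSpace G]

theorem dist_mul_self_left_of_left_invariant
    (hleft : ∀ x y z : G, dist (x * y) (x * z) = dist y z) (x y : G) :
    dist (x * y) x = dist y 1 := by
  simpa using hleft x y 1

def zeroDistSubgroup (hleft : ∀ x y z : G, dist (x * y) (x * z) = dist y z) : Subgroup G where
  carrier := {x | dist x 1 = 0}
  one_mem' := dist_self 1
  mul_mem' {a b} (ha : dist a 1 = 0) (hb : dist b 1 = 0) := by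
    have : dist (a * b) 1 ≤ dist b 1 + dist a 1 :=
      dist_mul_self_left_of_left_invariant hleft a b ▸ dist_triangle (a * b) a 1
    exact le_antisymm (by linarith) dist_nonneg
  inv_mem' {a} (ha : dist a 1 = 0) := by
    have := hleft a⁻¹ 1 a
    rwa [mul_one, inv_mul_cancel, dist_comm 1, ha] at this

theorem zeroDistSubgroup_normal (hleft : ∀ x y z : G, dist (x * y) (x * z) = dist y z)
    (hR : ∀ y : G, ContinuousAt (fun z : G => z * y) 1) : (zeroDistSubgroup hleft).Normal where
  conj_mem n (hn : dist n 1 = 0) g := by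
    change dist (g * n * g⁻¹) 1 = 0
    have := hleft g (n * g⁻¹) g⁻¹
    rw [mul_inv_cancel, ← mul_assoc] at this
    rw [this]
    simpa using dist_eq_zero_of_continuousAt (hR g⁻¹) hn

end LeftInvariant

theorem stmt8_general {G : Type*} [Group G] [PseudoMetricSpace G]
    (δ : ℝ → G → G)
    (hmul : ∀ (l : ℝ) (x y : G), δ l (x * y) = δ l x * δ l y)
    (hleft : ∀ x y z : G, dist (x * y) (x * z) = dist y z)
    (hdil : ∀ (l : ℝ) (x y : G), dist (δ l x) (δ l y) = |l| * dist x y)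
    (hR : ∀ y : G, ContinuousAt (fun z : G => z * y) (1 : G)) :
    ∃ H : Subgroup G, H.Normal ∧ (H : Set G) = {x : G | dist x (1 : G) = 0} ∧
      ∀ (l : ℝ), ∀ x ∈ H, δ l x ∈ H := by
  refine ⟨zeroDistSubgroup hleft, zeroDistSubgroup_normal hleft hR, rfl, ?_⟩
  intro l x (hx : dist x 1 = 0)
  have hone : δ l 1 = 1 := map_one (MonoidHom.mk' (δ l) (hmul l))
  show dist (δ l x) 1 = 0
  rw [← hone, hdil, hx, mul_zero]

theorem stmt8 {G : Type*} [Group G] [PseudoMetricSpace G]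
    (δ : ℝ → G → G)
    (hmul : ∀ (l : ℝ) (x y : G), δ l (x * y) = δ l x * δ l y)
    (h0 : ∀ x : G, δ 0 x = 1)
    (hcomp : ∀ (l m : ℝ) (x : G), δ l (δ m x) = δ (l * m) x)
    (hbij : ∀ l : ℝ, l ≠ 0 → Function.Bijective (δ l))
    (hleft : ∀ x y z : G, dist (x * y) (x * z) = dist y z)
    (hdil : ∀ (l : ℝ) (x y : G), dist (δ l x) (δ l y) = |l| * dist x y)
    (hR : ∀ y : G, ContinuousAt (fun z : G => z * y) (1 : G)) :
    ∃ H : Subgroup G, H.Normal ∧ (H : Set G) = {x : G | dist x (1 : G) = 0} ∧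
      ∀ (l : ℝ), ∀ x ∈ H, δ l x ∈ H :=
  stmt8_general δ hmul hleft hdil hR
end

section
/- Let (G, δ, d) be a complete metric scalable group such that the subgroup of G generated by the first layer V_1(G) is dense in G. Then V_1(G) = G if and only if G is abelian. -/
theorem stmt11 {G : Type*} [Group G] [MetricSpace G] [CompleteSpace G]
    (δ : ℝ → G → G)
    (hmul : ∀ (l : ℝ) (x y : G), δ l (x * y) = δ l x * δ l y)
    (h0 : ∀ x : G, δ 0 x = 1)
    (hcomp : ∀ (l m : ℝ) (x : G), δ l (δ m x) = δ (l * m) x)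
    (hbij : ∀ l : ℝ, l ≠ 0 → Function.Bijective (δ l))
    (hleft : ∀ x y z : G, dist (x * y) (x * z) = dist y z)
    (hdil : ∀ (l : ℝ) (x y : G), dist (δ l x) (δ l y) = |l| * dist x y)
    (hcmul : Continuous fun p : G × G => p.1 * p.2)
    (hcinv : Continuous fun x : G => x⁻¹)
    (hcdil : Continuous fun p : ℝ × G => δ p.1 p.2)
    (hdense : Dense ((Subgroup.closure {x : G | ∀ t s : ℝ, δ (t + s) x = δ t x * δ s x} :
      Subgroup G) : Set G)) :
    {x : G | ∀ t s : ℝ, δ (t + s) x = δ t x * δ s x} = Set.univ ↔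
      ∀ x y : G, x * y = y * x := by
  set S := {x : G | ∀ t s : ℝ, δ (t + s) x = δ t x * δ s x} with hSdef
  have hone : ∀ l : ℝ, δ l (1 : G) = 1 := by
    intro l
    have h := hmul l 1 1
    rw [mul_one] at h
    exact (mul_left_cancel (a := δ l 1) (by rw [mul_one, ← h])).symm
  have hid : ∀ x : G, δ 1 x = x := by
    intro x
    have hb := hbij 1 one_ne_zero
    have : δ 1 (δ 1 x) = δ 1 x := by rw [hcomp]; norm_num
    exact hb.1 this
  have hinv : ∀ (l : ℝ) (x : G), δ l x⁻¹ = (δ l x)⁻¹ := by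
    intro l x
    have h := hmul l x x⁻¹
    rw [mul_inv_cancel, hone] at h
    exact eq_inv_of_mul_eq_one_right h.symm
  constructor
  · intro h x y
    have hsq : ∀ z : G, δ 2 z = z * z := by
      intro z
      have hz : z ∈ S := h ▸ Set.mem_univ z
      have := hz 1 1
      norm_num [hid] at this
      exact this
    have h2 : δ 2 (x * y) = x * y * (x * y) := hsq _
    rw [hmul, hsq, hsq] at h2
    -- h2 : x * x * (y * y) = x * y * (x * y)
    rw [mul_assoc x x, mul_assoc x y] at h2
    have h3 := mul_left_cancel h2
    rw [← mul_assoc, ← mul_assoc] at h3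
    exact mul_right_cancel h3
  · intro hab
    have comm4 : ∀ a b c d : G, a * b * (c * d) = a * c * (b * d) := by
      intro a b c d
      rw [mul_assoc, mul_assoc, ← mul_assoc b, hab b c, mul_assoc]
    have hmem_mul : ∀ x y : G, x ∈ S → y ∈ S → x * y ∈ S := by
      intro x y hx hy t s
      rw [hmul, hx t s, hy t s, comm4, ← hmul, ← hmul]
    have hmem_one : (1 : G) ∈ S := by
      intro t s; rw [hone, hone, hone, one_mul]
    have hmem_inv : ∀ x : G, x ∈ S → x⁻¹ ∈ S := by
      intro x hx t s
      rw [hinv, hinv, hinv, hx t s, mul_inv_rev, hab]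
    let H : Subgroup G :=
      { carrier := S
        mul_mem' := fun hx hy => hmem_mul _ _ hx hy
        one_mem' := hmem_one
        inv_mem' := fun hx => hmem_inv _ hx }
    have hcl : ((Subgroup.closure S : Subgroup G) : Set G) = S := by
      apply Set.Subset.antisymm
      · have hle : Subgroup.closure S ≤ H := (Subgroup.closure_le H).mpr (fun y hy => hy)
        exact fun x hx => hle hx
      · exact Subgroup.subset_closure
    rw [hcl] at hdense
    have hc : ∀ l : ℝ, Continuous (δ l) := fun l =>
      hcdil.comp (Continuous.prodMk_right l)
    have hSclosed : IsClosed S := by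
      have hrw : S = ⋂ (t : ℝ), ⋂ (s : ℝ), {x : G | δ (t + s) x = δ t x * δ s x} := by
        ext x
        simp only [hSdef, Set.mem_setOf_eq, Set.mem_iInter]
      rw [hrw]
      refine isClosed_iInter fun t => isClosed_iInter fun s => ?_
      exact isClosed_eq (hc (t + s)) (hcmul.comp ((hc t).prodMk (hc s)))
    rw [← hSclosed.closure_eq]
    exact hdense.closure_eq
end

section
/- Let (G, δ) be a scalable group equipped with a compatible distance d. Suppose that the right translation R_x : G → G, R_x(y) = yx, is continuous for every x ∈ G, and that the subgroup of G generated by the first layer V_1(G) is dense in G. Then the dilation map δ : ℝ × G → G is Cauchy-continuous: it is continuous, and whenever (λ_n) is a Cauchy sequence in ℝ and (x_n) is a Cauchy sequence in G, the sequence (δ_{λ_n}(x_n)) is Cauchy in G. -/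
open Filter Topology Function
open scoped NNReal

/-!
Left translations are isometries and right translations are continuous, so `G` is a topological
group, and for every `λ` in a bounded set the dilation `δ λ` is Lipschitz with a common constant.
On the first layer, `t ↦ δ t y` is Lipschitz (it is a one-parameter subgroup), so it is continuous
for every `y` in the subgroup generated by the first layer, and by density and equicontinuity for
every `y ∈ G`. Continuity in `λ` for fixed `y` together with local equi-Lipschitz continuity in `y`
gives joint continuity and the preservation of Cauchy sequences.
-/

section LocallyEquiLipschitz

variable {X Y Z : Type*} [TopologicalSpace X] [PseudoMetricSpace Y] [PseudoMetricSpace Z]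

def LocallyEquiLipschitz (f : X → Y → Z) : Prop :=
  ∀ x₀, ∃ K : ℝ≥0, ∀ᶠ x in 𝓝 x₀, LipschitzWith K (f x)

theorem locallyEquiLipschitz_of_dist_le_abs_mul {f : ℝ → Y → Z}
    (hf : ∀ l x y, dist (f l x) (f l y) ≤ |l| * dist x y) : LocallyEquiLipschitz f := by
  intro l₀
  refine ⟨‖l₀‖₊ + 1, ?_⟩
  filter_upwards [Metric.ball_mem_nhds l₀ one_pos] with l hl
  refine LipschitzWith.of_dist_le_mul fun x y =>
    (hf l x y).trans (mul_le_mul_of_nonneg_right ?_ dist_nonneg)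
  rw [Metric.mem_ball, Real.dist_eq] at hl
  have := abs_sub_abs_le_abs_sub l l₀
  push_cast
  rw [Real.norm_eq_abs]
  linarith

variable {f : X → Y → Z}

theorem LocallyEquiLipschitz.continuous_apply_of_dense (hf : LocallyEquiLipschitz f) {D : Set Y}
    (hD : Dense D) (hcont : ∀ y ∈ D, Continuous (f · y)) (y : Y) : Continuous (f · y) := by
  have : (𝓝[D] y).NeBot := mem_closure_iff_nhdsWithin_neBot.1 (hD y)
  refine TendstoLocallyUniformly.continuous (F := fun y' x => f x y') (p := 𝓝[D] y) ?_
    (eventually_nhdsWithin_of_forall hcont).frequently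
  rw [Metric.tendstoLocallyUniformly_iff]
  intro ε hε x₀
  obtain ⟨K, hK⟩ := hf x₀
  refine ⟨_, hK, ?_⟩
  have hsmall : ∀ᶠ y' in 𝓝 y, K * dist y y' < ε := by
    have : Tendsto (fun y' => K * dist y y') (𝓝 y) (𝓝 (K * dist y y)) :=
      tendsto_const_nhds.mul (tendsto_const_nhds.dist tendsto_id)
    rw [dist_self, mul_zero] at this
    exact this.eventually (gt_mem_nhds hε)
  filter_upwards [nhdsWithin_le_nhds hsmall] with y' hy' x hx
  exact (hx.dist_le_mul y y').trans_lt hy'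

theorem LocallyEquiLipschitz.continuous_uncurry (hf : LocallyEquiLipschitz f)
    (hcont : ∀ y, Continuous (f · y)) : Continuous (uncurry f) := by
  refine continuous_iff_continuousAt.2 fun ⟨x₀, y₀⟩ => ?_
  obtain ⟨K, hK⟩ := hf x₀
  rw [ContinuousAt, tendsto_iff_dist_tendsto_zero]
  have hbound : ∀ᶠ p : X × Y in 𝓝 (x₀, y₀),
      dist (f p.1 p.2) (f x₀ y₀) ≤ K * dist p.2 y₀ + dist (f p.1 y₀) (f x₀ y₀) := by
    filter_upwards [(continuous_fst.tendsto _).eventually hK] with p hp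
    exact (dist_triangle _ (f p.1 y₀) _).trans (add_le_add_left (hp.dist_le_mul _ _) _)
  refine squeeze_zero' (.of_forall fun _ => dist_nonneg) hbound ?_
  have : Continuous fun p : X × Y => K * dist p.2 y₀ + dist (f p.1 y₀) (f x₀ y₀) :=
    (continuous_const.mul (continuous_snd.dist continuous_const)).add
      (((hcont y₀).comp continuous_fst).dist continuous_const)
  simpa using this.tendsto (x₀, y₀)

theorem cauchySeq_apply_of_eventually_lipschitzWith {g : ℕ → Y → Z} {K : ℝ≥0}
    (hg : ∀ᶠ n in atTop, LipschitzWith K (g n)) (hpt : ∀ y, CauchySeq (g · y)) {u : ℕ → Y}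
    (hu : CauchySeq u) : CauchySeq fun n => g n (u n) := by
  rw [Metric.cauchySeq_iff]
  intro ε hε
  set η := ε / (2 * K + 1)
  have hη : 0 < η := by positivity
  obtain ⟨N₀, hN₀⟩ := eventually_atTop.1 hg
  obtain ⟨N₁, hN₁⟩ := Metric.cauchySeq_iff.1 hu η hη
  obtain ⟨N₂, hN₂⟩ := Metric.cauchySeq_iff.1 (hpt (u N₁)) η hη
  have hfar : ∀ n ≥ max N₀ N₁, dist (g n (u n)) (g n (u N₁)) ≤ K * η := fun n hn =>
    ((hN₀ n (le_of_max_le_left hn)).dist_le_mul _ _).trans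
      (mul_le_mul_of_nonneg_left (hN₁ n (le_of_max_le_right hn) N₁ le_rfl).le K.2)
  refine ⟨max (max N₀ N₁) N₂, fun m hm n hn => ?_⟩
  calc dist (g m (u m)) (g n (u n))
      ≤ dist (g m (u m)) (g m (u N₁)) + dist (g m (u N₁)) (g n (u N₁))
          + dist (g n (u N₁)) (g n (u n)) := dist_triangle4 _ _ _ _
    _ < K * η + η + K * η := by
        rw [dist_comm (g n (u N₁))]
        exact add_lt_add_of_lt_of_le (add_lt_add_of_le_of_lt (hfar m (le_of_max_le_left hm))
          (hN₂ m (le_of_max_le_right hm) n (le_of_max_le_right hn)))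
          (hfar n (le_of_max_le_left hn))
    _ = ε := by rw [show K * η + η + K * η = (2 * K + 1) * η by ring, mul_div_cancel₀ _ (by positivity)]

theorem LocallyEquiLipschitz.cauchySeq_apply [PseudoMetricSpace X] (hf : LocallyEquiLipschitz f)
    (hcont : ∀ y, Continuous (f · y)) {x : ℕ → X} {a : X} (hx : Tendsto x atTop (𝓝 a))
    {u : ℕ → Y} (hu : CauchySeq u) : CauchySeq fun n => f (x n) (u n) := by
  obtain ⟨K, hK⟩ := hf a
  exact cauchySeq_apply_of_eventually_lipschitzWith (hx.eventually hK)
    (fun y => (((hcont y).tendsto a).comp hx).cauchySeq) hu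

end LocallyEquiLipschitz

section ScalableGroup

variable {G : Type*} [Group G] [PseudoMetricSpace G] [IsIsometricSMul G G]

theorem isTopologicalGroup_of_continuous_mul_const (hR : ∀ x : G, Continuous (· * x)) :
    IsTopologicalGroup G := by
  refine { continuous_mul := ?_, continuous_inv := ?_ }
  · refine continuous_iff_continuousAt.2 fun ⟨a, b⟩ => ?_
    rw [ContinuousAt, tendsto_iff_dist_tendsto_zero]
    have hbound : ∀ p : G × G, dist (p.1 * p.2) (a * b) ≤ dist p.2 b + dist (p.1 * b) (a * b) :=
      fun p => (dist_triangle _ (p.1 * b) _).trans_eq (by rw [dist_mul_left])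
    refine squeeze_zero (fun _ => dist_nonneg) hbound ?_
    have : Continuous fun p : G × G => dist p.2 b + dist (p.1 * b) (a * b) :=
      (continuous_snd.dist continuous_const).add
        (((hR b).comp continuous_fst).dist continuous_const)
    simpa using this.tendsto (a, b)
  · refine continuous_iff_continuousAt.2 fun a => ?_
    rw [ContinuousAt, tendsto_iff_dist_tendsto_zero]
    have heq : ∀ x : G, dist x⁻¹ a⁻¹ = dist 1 (x * a⁻¹) := fun x => by
      rw [← dist_mul_left x, mul_inv_cancel]
    simp_rw [heq]
    simpa using (tendsto_const_nhds (x := (1 : G))).dist ((hR a⁻¹).tendsto a)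

variable {δ : ℝ → G →* G}

def firstLayer (δ : ℝ → G →* G) : Set G := {x | ∀ t s : ℝ, δ (t + s) x = δ t x * δ s x}

theorem lipschitzWith_apply_of_mem_firstLayer
    (hdil : ∀ (l : ℝ) (x y : G), dist (δ l x) (δ l y) = |l| * dist x y)
    {y : G} (hy : y ∈ firstLayer δ) : LipschitzWith (nndist y 1) (δ · y) := by
  refine LipschitzWith.of_dist_le_mul fun t s => le_of_eq ?_
  have hsplit : δ t y = δ s y * δ (t - s) y := by simpa using hy s (t - s)
  calc dist (δ t y) (δ s y) = dist (δ s y * δ (t - s) y) (δ s y * δ (t - s) 1) := by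
        rw [hsplit, map_one, mul_one]
    _ = nndist y 1 * dist t s := by rw [dist_mul_left, hdil, coe_nndist, Real.dist_eq, mul_comm]

theorem continuous_apply_of_mem_closure_firstLayer [IsTopologicalGroup G]
    (hdil : ∀ (l : ℝ) (x y : G), dist (δ l x) (δ l y) = |l| * dist x y)
    {y : G} (hy : y ∈ Subgroup.closure (firstLayer δ)) : Continuous (δ · y) := by
  induction hy using Subgroup.closure_induction with
  | mem y hy => exact (lipschitzWith_apply_of_mem_firstLayer hdil hy).continuous
  | one => simpa using continuous_const
  | mul y z _ _ hy hz => simp only [map_mul]; exact hy.mul hz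
  | inv y _ hy => simp only [map_inv]; exact hy.inv

end ScalableGroup

theorem stmt13_general {G : Type*} [Group G] [MetricSpace G]
    (δ : ℝ → G → G)
    (hmul : ∀ (l : ℝ) (x y : G), δ l (x * y) = δ l x * δ l y)
    (hleft : ∀ x y z : G, dist (x * y) (x * z) = dist y z)
    (hdil : ∀ (l : ℝ) (x y : G), dist (δ l x) (δ l y) = |l| * dist x y)
    (hR : ∀ x : G, Continuous fun y : G => y * x)
    (hdense : Dense ((Subgroup.closure {x : G | ∀ t s : ℝ, δ (t + s) x = δ t x * δ s x} :
      Subgroup G) : Set G)) :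
    Continuous (fun p : ℝ × G => δ p.1 p.2) ∧
      ∀ (l : ℕ → ℝ) (u : ℕ → G), CauchySeq l → CauchySeq u →
        CauchySeq fun n => δ (l n) (u n) := by
  have : IsIsometricSMul G G := ⟨fun c => Isometry.of_dist_eq (hleft c)⟩
  have := isTopologicalGroup_of_continuous_mul_const hR
  let Δ : ℝ → G →* G := fun l => MonoidHom.mk' (δ l) (hmul l)
  have hequi : LocallyEquiLipschitz δ :=
    locallyEquiLipschitz_of_dist_le_abs_mul fun l x y => (hdil l x y).le
  have hcont : ∀ y, Continuous (δ · y) :=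
    hequi.continuous_apply_of_dense hdense fun y hy =>
      continuous_apply_of_mem_closure_firstLayer (δ := Δ) hdil hy
  refine ⟨hequi.continuous_uncurry hcont, fun l u hl hu => ?_⟩
  obtain ⟨a, hla⟩ := cauchySeq_tendsto_of_complete hl
  exact hequi.cauchySeq_apply hcont hla hu

theorem stmt13 {G : Type*} [Group G] [MetricSpace G]
    (δ : ℝ → G → G)
    (hmul : ∀ (l : ℝ) (x y : G), δ l (x * y) = δ l x * δ l y)
    (h0 : ∀ x : G, δ 0 x = 1)
    (hcomp : ∀ (l m : ℝ) (x : G), δ l (δ m x) = δ (l * m) x)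
    (hbij : ∀ l : ℝ, l ≠ 0 → Function.Bijective (δ l))
    (hleft : ∀ x y z : G, dist (x * y) (x * z) = dist y z)
    (hdil : ∀ (l : ℝ) (x y : G), dist (δ l x) (δ l y) = |l| * dist x y)
    (hR : ∀ x : G, Continuous fun y : G => y * x)
    (hdense : Dense ((Subgroup.closure {x : G | ∀ t s : ℝ, δ (t + s) x = δ t x * δ s x} :
      Subgroup G) : Set G)) :
    Continuous (fun p : ℝ × G => δ p.1 p.2) ∧
      ∀ (l : ℕ → ℝ) (u : ℕ → G), CauchySeq l → CauchySeq u →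
        CauchySeq fun n => δ (l n) (u n) :=
  stmt13_general δ hmul hleft hdil hR hdense
end

section
/- Let (I, ≤) be a directed set and for each i ∈ I let G_i be a group with identity e_i endowed with a complete left-invariant distance d_i; for i ≤ j let P_{ij} : G_j → G_i be a 1-Lipschitz group homomorphism with P_{ii} = id and P_{ik} = P_{ij} ∘ P_{jk} for i ≤ j ≤ k. Let G' := { x = (x_i)_{i∈I} ∈ ∏_{i∈I} G_i : x_i = P_{ij}(x_j) for all i ≤ j }, let G := { x ∈ G' : sup_{i∈I} d_i(x_i, e_i) < ∞ }, and define d(x, y) := sup_{i∈I} d_i(x_i, y_i) for x, y ∈ G. Then (G, d) is a complete metric space: d is a finite-valued distance on G and every Cauchy sequence in (G, d) converges to an element of G. -/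
theorem stmt19 {I : Type*} [Preorder I]
    (hdir : ∀ i j : I, ∃ k : I, i ≤ k ∧ j ≤ k)
    (G : I → Type*) [∀ i, Group (G i)] [∀ i, MetricSpace (G i)] [∀ i, CompleteSpace (G i)]
    (hleft : ∀ i, ∀ x y z : G i, dist (x * y) (x * z) = dist y z)
    (P : ∀ i j, i ≤ j → G j → G i)
    (hhom : ∀ i j (h : i ≤ j), ∀ x y : G j, P i j h (x * y) = P i j h x * P i j h y)
    (hlip : ∀ i j (h : i ≤ j), LipschitzWith 1 (P i j h))
    (hid : ∀ i, P i i le_rfl = id)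
    (hcomp : ∀ i j k (hij : i ≤ j) (hjk : j ≤ k),
      P i k (le_trans hij hjk) = P i j hij ∘ P j k hjk) :
    -- `S` is the set of threads of the inverse system at finite distance from the identity,
    -- and `D` is the supremum-distance.
    let S : Set (∀ i, G i) := {x | (∀ i j (h : i ≤ j), x i = P i j h (x j)) ∧
      BddAbove (Set.range fun i => dist (x i) (1 : G i))}
    let D : (∀ i, G i) → (∀ i, G i) → ℝ := fun x y => ⨆ i, dist (x i) (y i)
    -- `D` is a finite-valued distance on `S` …
    (∀ x ∈ S, ∀ y ∈ S, BddAbove (Set.range fun i => dist (x i) (y i))) ∧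
    (∀ x ∈ S, D x x = 0) ∧
    (∀ x ∈ S, ∀ y ∈ S, D x y = D y x) ∧
    (∀ x ∈ S, ∀ y ∈ S, ∀ z ∈ S, D x z ≤ D x y + D y z) ∧
    (∀ x ∈ S, ∀ y ∈ S, D x y = 0 → x = y) ∧
    -- … and every `D`-Cauchy sequence in `S` converges in `(S, D)`.
    (∀ u : ℕ → ∀ i, G i, (∀ n, u n ∈ S) →
      (∀ ε : ℝ, 0 < ε → ∃ N : ℕ, ∀ m ≥ N, ∀ n ≥ N, D (u m) (u n) < ε) →
      ∃ x ∈ S, ∀ ε : ℝ, 0 < ε → ∃ N : ℕ, ∀ n ≥ N, D (u n) x < ε) := by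
  intro S D
  have hbdd : ∀ x ∈ S, ∀ y ∈ S, BddAbove (Set.range fun i => dist (x i) (y i)) := by
    rintro x ⟨-, Cx, hCx⟩ y ⟨-, Cy, hCy⟩
    refine ⟨Cx + Cy, ?_⟩
    rintro r ⟨i, rfl⟩
    calc dist (x i) (y i) ≤ dist (x i) 1 + dist 1 (y i) := dist_triangle _ _ _
      _ ≤ Cx + Cy := add_le_add (hCx (Set.mem_range_self i))
          (by rw [dist_comm]; exact hCy (Set.mem_range_self i))
  have hle : ∀ x ∈ S, ∀ y ∈ S, ∀ i, dist (x i) (y i) ≤ D x y := by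
    intro x hx y hy i
    exact le_ciSup (hbdd x hx y hy) i
  have hnonneg : ∀ x y, 0 ≤ D x y := fun x y => Real.iSup_nonneg fun i => dist_nonneg
  refine ⟨hbdd, ?_, ?_, ?_, ?_, ?_⟩
  · intro x hx
    simp only [D, dist_self]
    exact Real.iSup_const_zero
  · intro x hx y hy
    simp only [D, dist_comm]
  · intro x hx y hy z hz
    refine Real.iSup_le (fun i => ?_) (add_nonneg (hnonneg x y) (hnonneg y z))
    calc dist (x i) (z i) ≤ dist (x i) (y i) + dist (y i) (z i) := dist_triangle _ _ _
      _ ≤ D x y + D y z := add_le_add (hle x hx y hy i) (hle y hy z hz i)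
  · intro x hx y hy h0
    funext i
    have := hle x hx y hy i
    rw [h0] at this
    exact dist_le_zero.mp this
  · intro u hu hcau
    -- each coordinate is Cauchy
    have hcoord : ∀ i, CauchySeq (fun n => u n i) := by
      intro i
      rw [Metric.cauchySeq_iff]
      intro ε hε
      obtain ⟨N, hN⟩ := hcau ε hε
      exact ⟨N, fun m hm n hn => lt_of_le_of_lt
        (hle (u m) (hu m) (u n) (hu n) i) (hN m hm n hn)⟩
    choose x hx using fun i => cauchySeq_tendsto_of_complete (hcoord i)
    have hdistlim : ∀ i (a : G i), Filter.Tendsto (fun n => dist (u n i) a)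
        Filter.atTop (nhds (dist (x i) a)) :=
      fun i a => ((hx i).dist tendsto_const_nhds)
    -- the key uniform estimate: for n large, dist (u n i) (x i) ≤ ε
    have hkey : ∀ ε : ℝ, 0 < ε → ∃ N : ℕ, ∀ n ≥ N, ∀ i, dist (u n i) (x i) ≤ ε := by
      intro ε hε
      obtain ⟨N, hN⟩ := hcau ε hε
      refine ⟨N, fun n hn i => ?_⟩
      refine le_of_tendsto ((tendsto_const_nhds.dist (hx i))) ?_
      filter_upwards [Filter.eventually_ge_atTop N] with m hm
      exact (lt_of_le_of_lt (hle (u n) (hu n) (u m) (hu m) i) (hN n hn m hm)).le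
    obtain ⟨N₁, hN₁⟩ := hkey 1 one_pos
    have hxS : x ∈ S := by
      constructor
      · intro i j h
        have h1 : Filter.Tendsto (fun n => P i j h (u n j)) Filter.atTop (nhds (P i j h (x j))) :=
          ((hlip i j h).continuous.tendsto _).comp (hx j)
        have h2 : (fun n => P i j h (u n j)) = fun n => u n i := by
          funext n; exact ((hu n).1 i j h).symm
        rw [h2] at h1
        exact tendsto_nhds_unique (hx i) h1
      · obtain ⟨C, hC⟩ := (hu N₁).2
        refine ⟨1 + C, ?_⟩
        rintro r ⟨i, rfl⟩
        calc dist (x i) 1 ≤ dist (x i) (u N₁ i) + dist (u N₁ i) 1 := dist_triangle _ _ _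
          _ ≤ 1 + C := add_le_add (by rw [dist_comm]; exact hN₁ N₁ le_rfl i)
              (hC (Set.mem_range_self i))
    refine ⟨x, hxS, fun ε hε => ?_⟩
    obtain ⟨N, hN⟩ := hkey (ε / 2) (by linarith)
    refine ⟨N, fun n hn => ?_⟩
    have : D (u n) x ≤ ε / 2 :=
      Real.iSup_le (fun i => hN n hn i) (by linarith)
    linarith
end
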